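/- arXiv:2312.03646 — 5 statements merged into one kernel-verified Lean document; each statement's English description precedes it below -/
import Mathlib

section
/- Let W(δ) denote the orthogonal projection of δ_1·𝐧_1 + … + δ_t·𝐧_t onto the orthogonal complement of ker A. Then for all τ, δ ∈ ℤ^t, B⟨T(τ+δ)⟩ = (A(W(δ))) +ᵥ B⟨T(τ)⟩; in particular, if two offsets δ, δ' ∈ ℤ^t satisfy W(δ) = W(δ'), then B⟨T(τ+δ)⟩ = B⟨T(τ+δ')⟩, i.e., all tiles of the family {τ + δ' : W(δ') = W(δ)} have the same footprint. -/
open RealInnerProductSpace Pointwise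

/-!
The vector `v = ∑ j, δ j • 𝐧 j` pairs with `n j` to `s j * δ j`, so translating by `v` shifts every
slab of `T τ` onto the corresponding slab of `T (τ + δ)`. An affine map sends `v +ᵥ S` to
`A v +ᵥ B⟨S⟩`, and `A v = A (W δ)` because `v - W δ` lies in `(ker A)ᗮᗮ = ker A`.
-/

section

variable {E F : Type*} [NormedAddCommGroup E] [InnerProductSpace ℝ E]

lemma map_starProjection_orthogonal_ker [AddCommGroup F] [Module ℝ F] (A : E →ₗ[ℝ] F)
    [(LinearMap.ker A).HasOrthogonalProjection] (v : E) :
    A ((LinearMap.ker A)ᗮ.starProjection v) = A v := by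
  rw [Submodule.starProjection_orthogonal_val, map_sub,
    LinearMap.mem_ker.mp ((LinearMap.ker A).starProjection_apply_mem v), sub_zero]

lemma LinearMap.image_add_const_vadd_set [AddCommGroup F] [Module ℝ F] (A : E →ₗ[ℝ] F) (b : F)
    (v : E) (S : Set E) : (fun x => A x + b) '' (v +ᵥ S) = A v +ᵥ (fun x => A x + b) '' S := by
  simp only [← Set.image_vadd, Set.image_image, vadd_eq_add, map_add, add_assoc]

variable {ι : Type*}

def tile (n : ι → E) (s : ι → ℝ) (τ : ι → ℤ) : Set E :=
  {x | ∀ j, s j * (τ j : ℝ) ≤ ⟪x, n j⟫ ∧ ⟪x, n j⟫ < s j * ((τ j : ℝ) + 1)}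

lemma vadd_tile {n : ι → E} {s : ι → ℝ} {v : E} {δ : ι → ℤ}
    (hv : ∀ j, ⟪v, n j⟫ = s j * δ j) (τ : ι → ℤ) :
    v +ᵥ tile n s τ = tile n s (τ + δ) := by
  ext x
  simp only [Set.mem_vadd_set_iff_neg_vadd_mem, tile, Set.mem_ofPred_eq, vadd_eq_add,
    inner_add_left, inner_neg_left, hv, Pi.add_apply, Int.cast_add]
  refine forall_congr' fun j => ?_
  constructor <;> intro h <;> constructor <;> linarith [h.1, h.2]

lemma inner_sum_smul_of_dual [Fintype ι] [DecidableEq ι] {n N : ι → E} {s : ι → ℝ}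
    (hN : ∀ i j, ⟪N i, n j⟫ = if i = j then s j else 0) (c : ι → ℝ) (j : ι) :
    ⟪∑ i, c i • N i, n j⟫ = s j * c j := by
  simp [sum_inner, real_inner_smul_left, hN, mul_comm]

end

theorem footprint_translate_proj_general
    (d t k : ℕ)
    (n : Fin t → EuclideanSpace ℝ (Fin d))
    (s : Fin t → ℝ)
    (N : Fin t → EuclideanSpace ℝ (Fin d))
    (hN : ∀ i j, ⟪N i, n j⟫ = if i = j then s j else 0)
    (A : EuclideanSpace ℝ (Fin d) →ₗ[ℝ] EuclideanSpace ℝ (Fin k))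
    (b : EuclideanSpace ℝ (Fin k))
    (T : (Fin t → ℤ) → Set (EuclideanSpace ℝ (Fin d)))
    (hT : ∀ τ, T τ = {x | ∀ j, s j * (τ j : ℝ) ≤ ⟪x, n j⟫ ∧ ⟪x, n j⟫ < s j * ((τ j : ℝ) + 1)})
    (W : (Fin t → ℤ) → EuclideanSpace ℝ (Fin d))
    (hW : ∀ δ, W δ =
      (Submodule.orthogonalProjection (LinearMap.ker A)ᗮ (∑ j, (δ j : ℝ) • N j) :
        EuclideanSpace ℝ (Fin d))) :
    (∀ τ δ : Fin t → ℤ,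
      (fun x => A x + b) '' T (τ + δ) = A (W δ) +ᵥ ((fun x => A x + b) '' T τ)) ∧
    (∀ τ δ δ' : Fin t → ℤ, W δ = W δ' →
      (fun x => A x + b) '' T (τ + δ) = (fun x => A x + b) '' T (τ + δ')) := by
  obtain rfl : T = tile n s := funext hT
  have translate : ∀ τ δ : Fin t → ℤ,
      (fun x => A x + b) '' tile n s (τ + δ) = A (W δ) +ᵥ (fun x => A x + b) '' tile n s τ := by
    intro τ δ
    rw [hW, ← Submodule.starProjection_apply, map_starProjection_orthogonal_ker,
      ← LinearMap.image_add_const_vadd_set, vadd_tile (inner_sum_smul_of_dual hN _)]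
  exact ⟨translate, fun τ δ δ' h => by rw [translate, translate, h]⟩

/-- with `W δ` the orthogonal projection of `∑ j, δ j • 𝐧 j` onto the
orthogonal complement of `ker A`, footprints translate by `A (W δ)`; in particular
offsets with equal projections give equal footprints. -/
theorem footprint_translate_proj
    (d t k : ℕ) (ht : t ≤ d)
    (n : Fin t → EuclideanSpace ℝ (Fin d)) (hn : LinearIndependent ℝ n)
    (s : Fin t → ℝ) (hs : ∀ j, 0 < s j)
    (N : Fin t → EuclideanSpace ℝ (Fin d))
    (hN : ∀ i j, ⟪N i, n j⟫ = if i = j then s j else 0)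
    (A : EuclideanSpace ℝ (Fin d) →ₗ[ℝ] EuclideanSpace ℝ (Fin k))
    (b : EuclideanSpace ℝ (Fin k))
    (T : (Fin t → ℤ) → Set (EuclideanSpace ℝ (Fin d)))
    (hT : ∀ τ, T τ = {x | ∀ j, s j * (τ j : ℝ) ≤ ⟪x, n j⟫ ∧ ⟪x, n j⟫ < s j * ((τ j : ℝ) + 1)})
    (W : (Fin t → ℤ) → EuclideanSpace ℝ (Fin d))
    (hW : ∀ δ, W δ =
      (Submodule.orthogonalProjection (LinearMap.ker A)ᗮ (∑ j, (δ j : ℝ) • N j) :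
        EuclideanSpace ℝ (Fin d))) :
    (∀ τ δ : Fin t → ℤ,
      (fun x => A x + b) '' T (τ + δ) = A (W δ) +ᵥ ((fun x => A x + b) '' T τ)) ∧
    (∀ τ δ δ' : Fin t → ℤ, W δ = W δ' →
      (fun x => A x + b) '' T (τ + δ) = (fun x => A x + b) '' T (τ + δ')) :=
  footprint_translate_proj_general d t k n s N hN A b T hT W hW
end

section
/- Let B_1, …, B_Q be dependences B_i(x) = A_i x + b_i whose linear parts all have the same null space: ker A_i = K for every i. Then the footprints of translated tiles are obtained by translations determined by a single source-space vector independent of the tile: for every δ ∈ ℤ^t there exists u ∈ E (namely the orthogonal projection of Σ_j δ_j·𝐧_j onto the orthogonal complement of K), independent of τ and of i, such that for all τ ∈ ℤ^t and all i ∈ {1, …, Q}, B_i⟨T(τ+δ)⟩ = (A_i u) +ᵥ B_i⟨T(τ)⟩. -/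
/-!
Since `⟪∑ j, δ j • 𝐧 j, n j⟫ = s j * δ j`, shifting the tile coordinates by `δ` translates the tile
by `w = ∑ j, δ j • 𝐧 j`. Every `A i` vanishes on `K`, so it maps `w` and its projection onto `Kᗮ`
to the same vector, and an affine map sends a translate `w +ᵥ S` to `A i w +ᵥ B i ⟨S⟩`.
-/

open RealInnerProductSpace Pointwise

theorem LinearMap.apply_orthogonalProjectionOnto_orthogonal {E F : Type*} [NormedAddCommGroup E]
    [InnerProductSpace ℝ E] [AddCommGroup F] [Module ℝ F] {K : Submodule ℝ E}
    [K.HasOrthogonalProjection] {f : E →ₗ[ℝ] F} (hK : K ≤ LinearMap.ker f) (w : E) :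
    f (Kᗮ.orthogonalProjectionOnto w) = f w := by
  rw [Submodule.orthogonalProjectionOnto_orthogonal, map_sub,
    hK (K.starProjection_apply_mem w), sub_zero]

theorem Set.image_add_const_vadd {E F : Type*} [AddCommGroup E] [AddCommGroup F]
    (f : E →+ F) (c : F) (w : E) (S : Set E) :
    (fun x => f x + c) '' (w +ᵥ S) = f w +ᵥ (fun x => f x + c) '' S := by
  simp only [← Set.image_vadd, Set.image_image, vadd_eq_add, map_add, add_assoc]

section Tiles

variable {E : Type*} [NormedAddCommGroup E] [InnerProductSpace ℝ E] {ι : Type*}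

def slabTile (s : ι → ℝ) (n : ι → E) (τ : ι → ℤ) : Set E :=
  {x | ∀ j, s j * (τ j : ℝ) ≤ ⟪x, n j⟫ ∧ ⟪x, n j⟫ < s j * ((τ j : ℝ) + 1)}

theorem inner_sum_smul_dual [Fintype ι] [DecidableEq ι] {s : ι → ℝ} {n N : ι → E}
    (hN : ∀ i j, ⟪N i, n j⟫ = if i = j then s j else 0) (c : ι → ℝ) (j : ι) :
    ⟪∑ i, c i • N i, n j⟫ = s j * c j := by
  simp [sum_inner, real_inner_smul_left, hN, mul_comm]

theorem slabTile_add {s : ι → ℝ} {n : ι → E} {w : E} {δ : ι → ℤ}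
    (hw : ∀ j, ⟪w, n j⟫ = s j * δ j) (τ : ι → ℤ) :
    slabTile s n (τ + δ) = w +ᵥ slabTile s n τ := by
  ext x
  simp only [Set.mem_vadd_set_iff_neg_vadd_mem, slabTile, Set.mem_ofPred_eq, vadd_eq_add,
    inner_add_left, inner_neg_left, hw, Pi.add_apply, Int.cast_add]
  refine forall_congr' fun j => ?_
  constructor <;> rintro ⟨h₁, h₂⟩ <;> constructor <;> linarith

end Tiles

theorem same_kernel_common_translation_general
    (d t k Q : ℕ)
    (n : Fin t → EuclideanSpace ℝ (Fin d))
    (s : Fin t → ℝ)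
    (N : Fin t → EuclideanSpace ℝ (Fin d))
    (hN : ∀ i j, ⟪N i, n j⟫ = if i = j then s j else 0)
    (A : Fin Q → (EuclideanSpace ℝ (Fin d) →ₗ[ℝ] EuclideanSpace ℝ (Fin k)))
    (b : Fin Q → EuclideanSpace ℝ (Fin k))
    (K : Submodule ℝ (EuclideanSpace ℝ (Fin d)))
    (hK : ∀ i, LinearMap.ker (A i) = K)
    (T : (Fin t → ℤ) → Set (EuclideanSpace ℝ (Fin d)))
    (hT : ∀ τ, T τ = {x | ∀ j, s j * (τ j : ℝ) ≤ ⟪x, n j⟫ ∧ ⟪x, n j⟫ < s j * ((τ j : ℝ) + 1)}) :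
    ∀ δ : Fin t → ℤ, ∃ u : EuclideanSpace ℝ (Fin d),
      u = (Submodule.orthogonalProjectionOnto Kᗮ (∑ j, (δ j : ℝ) • N j) : EuclideanSpace ℝ (Fin d)) ∧
      ∀ (τ : Fin t → ℤ) (i : Fin Q),
        (fun x => A i x + b i) '' T (τ + δ) =
          A i u +ᵥ ((fun x => A i x + b i) '' T τ) := by
  intro δ
  refine ⟨_, rfl, fun τ i => ?_⟩
  have hT_tile : T = slabTile s n := funext hT
  rw [(A i).apply_orthogonalProjectionOnto_orthogonal (hK i).ge, hT_tile,
    slabTile_add (inner_sum_smul_dual hN _) τ]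
  exact Set.image_add_const_vadd (A i).toAddMonoidHom (b i) _ _

/-- if all dependences `B i x = A i x + b i` have the same null space `K`,
then for every offset `δ` there is a single source-space vector `u` (the orthogonal
projection of `∑ j, δ j • 𝐧 j` onto `Kᗮ`), independent of the tile `τ` and of the
dependence `i`, such that `B i ⟨T (τ+δ)⟩ = A i u +ᵥ B i ⟨T τ⟩` for all `τ` and `i`. -/
theorem same_kernel_common_translation
    (d t k Q : ℕ) (ht : t ≤ d)
    (n : Fin t → EuclideanSpace ℝ (Fin d)) (hn : LinearIndependent ℝ n)
    (s : Fin t → ℝ) (hs : ∀ j, 0 < s j)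
    (N : Fin t → EuclideanSpace ℝ (Fin d))
    (hN : ∀ i j, ⟪N i, n j⟫ = if i = j then s j else 0)
    (A : Fin Q → (EuclideanSpace ℝ (Fin d) →ₗ[ℝ] EuclideanSpace ℝ (Fin k)))
    (b : Fin Q → EuclideanSpace ℝ (Fin k))
    (K : Submodule ℝ (EuclideanSpace ℝ (Fin d)))
    (hK : ∀ i, LinearMap.ker (A i) = K)
    (T : (Fin t → ℤ) → Set (EuclideanSpace ℝ (Fin d)))
    (hT : ∀ τ, T τ = {x | ∀ j, s j * (τ j : ℝ) ≤ ⟪x, n j⟫ ∧ ⟪x, n j⟫ < s j * ((τ j : ℝ) + 1)}) :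
    ∀ δ : Fin t → ℤ, ∃ u : EuclideanSpace ℝ (Fin d),
      u = (Submodule.orthogonalProjectionOnto Kᗮ (∑ j, (δ j : ℝ) • N j) : EuclideanSpace ℝ (Fin d)) ∧
      ∀ (τ : Fin t → ℤ) (i : Fin Q),
        (fun x => A i x + b i) '' T (τ + δ) =
          A i u +ᵥ ((fun x => A i x + b i) '' T τ) :=
  same_kernel_common_translation_general d t k Q n s N hN A b K hK T hT
end

section
/- Let s ≥ 1 be an integer, and for (i0, i1) ∈ ℤ² let T(i0, i1) = {(i, j) ∈ ℤ² : s·i0 ≤ i + j < s·(1 + i0) and s·i1 ≤ j − i < s·(1 + i1)} be the tile for the diagonal tiling hyperplanes i+j and j−i. Then the footprint of T(i0, i1) under the dependence B(i, j) = i is exactly {i ∈ ℤ : s·(i0 − i1 − 1) < 2·i < s·(i0 − i1 + 1)}. -/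
/-- The `j`-ranges allowed by the two hyperplanes are the intervals `[a - i, a + s - i)` and
`[b + i, b + s + i)`; they meet exactly when each starts below the other's end. -/
theorem Int.exists_add_sub_mem_Ico_iff (a b s i : ℤ) :
    (∃ j : ℤ, i + j ∈ Set.Ico a (a + s) ∧ j - i ∈ Set.Ico b (b + s)) ↔
      a - b - s < 2 * i ∧ 2 * i < a - b + s := by
  constructor
  · rintro ⟨j, ⟨h₁, h₂⟩, h₃, h₄⟩
    omega
  · rintro ⟨h₁, h₂⟩
    exact ⟨max (a - i) (b + i), Set.mem_Ico.2 (by omega), Set.mem_Ico.2 (by omega)⟩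

theorem single_dep_footprint_general
    (s : ℤ) (i0 i1 : ℤ) :
    {i : ℤ | ∃ j : ℤ,
        (s * i0 ≤ i + j ∧ i + j < s * (1 + i0)) ∧
        (s * i1 ≤ j - i ∧ j - i < s * (1 + i1))} =
      {i : ℤ | s * (i0 - i1 - 1) < 2 * i ∧ 2 * i < s * (i0 - i1 + 1)} := by
  ext i
  have key := Int.exists_add_sub_mem_Ico_iff (s * i0) (s * i1) s i
  simpa only [Set.mem_ofPred_eq, Set.mem_Ico, mul_add, mul_sub, mul_one, add_comm s] using key

/-- for tile size `s ≥ 1` and diagonal tiling hyperplanes `i+j`, `j−i`,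
the footprint of tile `T(i0, i1)` under the dependence `B(i,j) = i` is exactly
`{i : s(i0 − i1 − 1) < 2i < s(i0 − i1 + 1)}`. -/
theorem single_dep_footprint
    (s : ℤ) (hs : 1 ≤ s) (i0 i1 : ℤ) :
    {i : ℤ | ∃ j : ℤ,
        (s * i0 ≤ i + j ∧ i + j < s * (1 + i0)) ∧
        (s * i1 ≤ j - i ∧ j - i < s * (1 + i1))} =
      {i : ℤ | s * (i0 - i1 - 1) < 2 * i ∧ 2 * i < s * (i0 - i1 + 1)} :=
  single_dep_footprint_general s i0 i1
end

section
/- Let s ≥ 1 be an integer and T(i0, i1) = {(i, j) ∈ ℤ² : s·i0 ≤ i + j < s·(1 + i0) and s·i1 ≤ j − i < s·(1 + i1)}, with footprint under B(i,j) = i. Then for every p ∈ ℤ: (1) B⟨T(i0,i1)⟩ ∩ B⟨T(i0 + p + 1, i1 + p)⟩ = {i ∈ ℤ : s·(i0 − i1) < 2·i < s·(i0 − i1 + 1)}, independent of p; (2) B⟨T(i0,i1)⟩ ∩ B⟨T(i0 + p − 1, i1 + p)⟩ = {i ∈ ℤ : s·(i0 − i1 − 1) < 2·i < s·(i0 − i1)},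 independent of p; and (3) for all p, q ∈ ℤ, B⟨T(i0 + p + 1, i1 + p)⟩ ∩ B⟨T(i0 + q − 1, i1 + q)⟩ = ∅. -/
lemma fp_char (s : ℤ) (hs : 1 ≤ s) (a b i : ℤ) :
    (∃ j : ℤ, (s * a ≤ i + j ∧ i + j < s * (1 + a)) ∧
      (s * b ≤ j - i ∧ j - i < s * (1 + b))) ↔
    (s * (a - b - 1) < 2 * i ∧ 2 * i < s * (a - b + 1)) := by
  constructor
  · rintro ⟨j, ⟨h1, h2⟩, h3, h4⟩
    constructor <;> nlinarith
  · rintro ⟨h1, h2⟩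
    refine ⟨max (s * a - i) (s * b + i), ?_⟩
    rcases max_cases (s * a - i) (s * b + i) with ⟨he, hle⟩ | ⟨he, hlt⟩ <;>
      rw [he] <;> constructor <;> constructor <;> nlinarith

/-- intersections of the footprint of `T(i0,i1)` under `B(i,j) = i` with
those of the consumer families `(i0+p+1, i1+p)` and `(i0+p−1, i1+p)` are independent of
`p`, and the footprints of the two shifted families never meet. -/
theorem single_dep_mars_intersections
    (s : ℤ) (hs : 1 ≤ s)
    (T : ℤ → ℤ → Set (ℤ × ℤ))
    (hT : ∀ i0 i1, T i0 i1 = {p : ℤ × ℤ |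
        (s * i0 ≤ p.1 + p.2 ∧ p.1 + p.2 < s * (1 + i0)) ∧
        (s * i1 ≤ p.2 - p.1 ∧ p.2 - p.1 < s * (1 + i1))})
    (fp : ℤ → ℤ → Set ℤ)
    (hfp : ∀ i0 i1, fp i0 i1 = {i : ℤ | ∃ j : ℤ, (i, j) ∈ T i0 i1})
    (i0 i1 : ℤ) :
    (∀ p : ℤ, fp i0 i1 ∩ fp (i0 + p + 1) (i1 + p) =
      {i : ℤ | s * (i0 - i1) < 2 * i ∧ 2 * i < s * (i0 - i1 + 1)}) ∧
    (∀ p : ℤ, fp i0 i1 ∩ fp (i0 + p - 1) (i1 + p) =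
      {i : ℤ | s * (i0 - i1 - 1) < 2 * i ∧ 2 * i < s * (i0 - i1)}) ∧
    (∀ p q : ℤ, fp (i0 + p + 1) (i1 + p) ∩ fp (i0 + q - 1) (i1 + q) = ∅) := by
  have key : ∀ a b : ℤ, fp a b = {i : ℤ | s * (a - b - 1) < 2 * i ∧ 2 * i < s * (a - b + 1)} := by
    intro a b
    ext i
    rw [hfp, Set.mem_setOf_eq]
    simp only [hT, Set.mem_setOf_eq]
    exact fp_char s hs a b i
  refine ⟨fun p => ?_, fun p => ?_, fun p q => ?_⟩
  · ext i
    simp only [key, Set.mem_inter_iff, Set.mem_setOf_eq]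
    constructor
    · rintro ⟨⟨h1, h2⟩, h3, h4⟩
      constructor <;> nlinarith
    · rintro ⟨h1, h2⟩
      refine ⟨⟨by nlinarith, by nlinarith⟩, by nlinarith, by nlinarith⟩
  · ext i
    simp only [key, Set.mem_inter_iff, Set.mem_setOf_eq]
    constructor
    · rintro ⟨⟨h1, h2⟩, h3, h4⟩
      constructor <;> nlinarith
    · rintro ⟨h1, h2⟩
      refine ⟨⟨by nlinarith, by nlinarith⟩, by nlinarith, by nlinarith⟩
  · ext i
    simp only [key, Set.mem_inter_iff, Set.mem_setOf_eq, Set.mem_empty_iff_false, iff_false]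
    rintro ⟨⟨h1, h2⟩, h3, h4⟩
    nlinarith
end

section
/- Consider the Jacobi 1D uniform dependences B_1(i,j) = (i−1, j−1), B_2(i,j) = (i, j−1), B_3(i,j) = (i+1, j−1) on ℤ², with tiles T(i1, i2) = {(i, j) ∈ ℤ² : s·i1 ≤ i + j < s·(1 + i1) and s·i2 ≤ j − i < s·(1 + i2)} for an integer s ≥ 3, and combined footprint FP(i1,i2) = B_1⟨T(i1,i2)⟩ ∪ B_2⟨T(i1,i2)⟩ ∪ B_3⟨T(i1,i2)⟩ ⊆ ℤ². Then for every (i1, i2) ∈ ℤ², the set of tiles whose combined footprint intersects FP(i1, i2) is exactly {(i1, i2) + v : v ∈ {(0,0), (−1,0), (0,1), (−1,1), (1,0), (0,−1), (1,−1)}}, i.e., FP(i1',i2') ∩ FP(i1,i2) ≠ ∅ if and only if (i1' − i1, i2' − i2) is one of these seven offsets. -/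
/-!
Proof idea: in the rotated coordinates `u = i + j`, `v = j - i` the tile `T(i1, i2)` is the
product of the blocks `[s i1, s (i1 + 1))` and `[s i2, s (i2 + 1))`. A point lies in the
footprint of a tile iff one of its three upper neighbours `(i + e, j + 1)`, `|e| ≤ 1`, lies in
the tile, so two footprints meet iff the tiles contain points `p` and `p + (k, 0)` with
`|k| ≤ 2`. Such a shift moves `u` by `k` and `v` by `-k`; as `|k| < s`, the tile indices then
differ by at most one in each coordinate and, since `u + v` is unchanged, by at most one in
their sum. These are exactly the seven offsets, and each is realised by a point near the
corner of the tile facing its neighbour.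
-/

open Set

namespace Jacobi1D

def tile (s i1 i2 : ℤ) : Set (ℤ × ℤ) :=
  {p | p.1 + p.2 ∈ Ico (s * i1) (s * (1 + i1)) ∧ p.2 - p.1 ∈ Ico (s * i2) (s * (1 + i2))}

def footprint (S : Set (ℤ × ℤ)) : Set (ℤ × ℤ) :=
  (fun p : ℤ × ℤ => (p.1 - 1, p.2 - 1)) '' S ∪
  (fun p : ℤ × ℤ => (p.1, p.2 - 1)) '' S ∪
  (fun p : ℤ × ℤ => (p.1 + 1, p.2 - 1)) '' S

def offsets : Set (ℤ × ℤ) := {(0,0), (-1,0), (0,1), (-1,1), (1,0), (0,-1), (1,-1)}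

theorem mem_offsets_iff {d1 d2 : ℤ} :
    (d1, d2) ∈ offsets ↔ |d1| ≤ 1 ∧ |d2| ≤ 1 ∧ |d1 + d2| ≤ 1 := by
  simp only [offsets, mem_insert_iff, mem_singleton_iff, Prod.mk.injEq, abs_le]
  omega

theorem mem_footprint_iff {S : Set (ℤ × ℤ)} {q : ℤ × ℤ} :
    q ∈ footprint S ↔ ∃ e ∈ Icc (-1 : ℤ) 1, (q.1 + e, q.2 + 1) ∈ S := by
  obtain ⟨x, y⟩ := q
  simp only [footprint, mem_union, mem_image, Prod.exists, Prod.mk.injEq, mem_Icc]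
  constructor
  · rintro ((⟨a, b, h, rfl, rfl⟩ | ⟨a, b, h, rfl, rfl⟩) | ⟨a, b, h, rfl, rfl⟩)
    exacts [⟨1, by norm_num, by simpa using h⟩, ⟨0, by norm_num, by simpa using h⟩,
      ⟨-1, by norm_num, by simpa using h⟩]
  · rintro ⟨e, ⟨he₁, he₂⟩, h⟩
    obtain rfl | rfl | rfl : e = -1 ∨ e = 0 ∨ e = 1 := by omega
    · exact Or.inr ⟨_, _, h, by ring, by ring⟩
    · exact Or.inl (Or.inr ⟨_, _, h, by ring, by ring⟩)
    · exact Or.inl (Or.inl ⟨_, _, h, by ring, by ring⟩)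

theorem footprint_inter_nonempty_iff {S S' : Set (ℤ × ℤ)} :
    (footprint S' ∩ footprint S).Nonempty ↔
      ∃ p ∈ S, ∃ k ∈ Icc (-2 : ℤ) 2, (p.1 + k, p.2) ∈ S' := by
  simp only [Set.Nonempty, mem_inter_iff, mem_footprint_iff, mem_Icc]
  constructor
  · rintro ⟨q, ⟨e', he', hq'⟩, ⟨e, he, hq⟩⟩
    refine ⟨_, hq, e' - e, ⟨by omega, by omega⟩, ?_⟩
    convert hq' using 2
    ring
  · rintro ⟨p, hp, k, hk, hpk⟩
    -- split the shift `k` as `e' - e` with `e = -⌊k / 2⌋`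
    refine ⟨(p.1 + k / 2, p.2 - 1), ⟨k - k / 2, ⟨by omega, by omega⟩, ?_⟩,
      ⟨-(k / 2), ⟨by omega, by omega⟩, ?_⟩⟩
    · convert hpk using 2 <;> ring
    · convert hp using 2 <;> ring

theorem mul_sub_lt_of_mem_Ico {s a b x y : ℤ} (hx : x ∈ Ico (s * a) (s * (1 + a)))
    (hy : y ∈ Ico (s * b) (s * (1 + b))) : s * (a - b) < x - y + s := by
  linarith [hx.1, hy.2]

theorem sub_le_one_of_mem_Ico {s a b x y : ℤ} (hs : 0 < s)
    (hx : x ∈ Ico (s * a) (s * (1 + a))) (hy : y ∈ Ico (s * b) (s * (1 + b)))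
    (hxy : x - y ≤ s) : a - b ≤ 1 := by
  have h : s * (a - b) < s * 2 := by linarith [mul_sub_lt_of_mem_Ico hx hy]
  linarith [lt_of_mul_lt_mul_left h hs.le]

theorem add_sub_le_one_of_mem_Ico {s a b c d x y z w : ℤ} (hs : 0 < s)
    (hx : x ∈ Ico (s * a) (s * (1 + a))) (hy : y ∈ Ico (s * b) (s * (1 + b)))
    (hz : z ∈ Ico (s * c) (s * (1 + c))) (hw : w ∈ Ico (s * d) (s * (1 + d)))
    (hxyzw : x - y + (z - w) ≤ 0) : a - b + (c - d) ≤ 1 := by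
  have h : s * (a - b + (c - d)) < s * 2 := by
    linarith [mul_sub_lt_of_mem_Ico hx hy, mul_sub_lt_of_mem_Ico hz hw]
  linarith [lt_of_mul_lt_mul_left h hs.le]

theorem sub_mem_offsets_of_mem_tile {s i1 i2 i1' i2' k : ℤ} {p : ℤ × ℤ} (hs : 2 ≤ s)
    (hp : p ∈ tile s i1 i2) (hk : k ∈ Icc (-2 : ℤ) 2) (hpk : (p.1 + k, p.2) ∈ tile s i1' i2') :
    (i1' - i1, i2' - i2) ∈ offsets := by
  obtain ⟨hu, hv⟩ := hp
  obtain ⟨hu', hv'⟩ := hpk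
  obtain ⟨hk₁, hk₂⟩ := hk
  have hs₀ : 0 < s := by omega
  rw [mem_offsets_iff, abs_le, abs_le, abs_le]
  refine ⟨⟨?_, sub_le_one_of_mem_Ico hs₀ hu' hu (by omega)⟩,
    ⟨?_, sub_le_one_of_mem_Ico hs₀ hv' hv (by omega)⟩,
    ⟨?_, add_sub_le_one_of_mem_Ico hs₀ hu' hu hv' hv (by omega)⟩⟩
  · linarith [sub_le_one_of_mem_Ico hs₀ hu hu' (by omega)]
  · linarith [sub_le_one_of_mem_Ico hs₀ hv hv' (by omega)]
  · linarith [add_sub_le_one_of_mem_Ico hs₀ hu hu' hv hv' (by omega)]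

/-- The rotation `(i, j) ↦ (i + j, j - i)` only reaches pairs with `u ≡ v [ZMOD 2]`, hence the
slack of one. -/
theorem exists_rotate_eq_left (u v : ℤ) :
    ∃ p : ℤ × ℤ, (p.1 + p.2 = u ∨ p.1 + p.2 = u + 1) ∧ p.2 - p.1 = v :=
  ⟨((u - v + 1) / 2, (u - v + 1) / 2 + v), by omega⟩

theorem exists_rotate_eq_right (u v : ℤ) :
    ∃ p : ℤ × ℤ, p.1 + p.2 = u ∧ (p.2 - p.1 = v ∨ p.2 - p.1 = v + 1) :=
  ⟨((u - v) / 2, u - (u - v) / 2), by omega⟩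

theorem exists_shift_mem_tile_of_mem_offsets {s i1 i2 d1 d2 : ℤ} (hs : 3 ≤ s)
    (hd : (d1, d2) ∈ offsets) :
    ∃ p ∈ tile s i1 i2, ∃ k ∈ Icc (-2 : ℤ) 2, (p.1 + k, p.2) ∈ tile s (i1 + d1) (i2 + d2) := by
  simp only [tile, mem_ofPred_eq, mem_Ico, mem_Icc, mul_add, mul_one]
  simp only [offsets, mem_insert_iff, mem_singleton_iff, Prod.mk.injEq] at hd
  -- a point of the tile near the corner facing the neighbour, and the shift `k = d1 - d2`
  rcases hd with ⟨rfl, rfl⟩ | ⟨rfl, rfl⟩ | ⟨rfl, rfl⟩ | ⟨rfl, rfl⟩ | ⟨rfl, rfl⟩ | ⟨rfl, rfl⟩ |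
      ⟨rfl, rfl⟩
  · obtain ⟨p, hu, hv⟩ := exists_rotate_eq_right (s * i1) (s * i2)
    exact ⟨p, by omega, 0, by omega, by omega⟩
  · obtain ⟨p, hu, hv⟩ := exists_rotate_eq_right (s * i1) (s * i2)
    exact ⟨p, by omega, -1, by omega, by omega⟩
  · obtain ⟨p, hu, hv⟩ := exists_rotate_eq_left (s * i1 + 1) (s * i2 + s - 1)
    exact ⟨p, by omega, -1, by omega, by omega⟩
  · obtain ⟨p, hu, hv⟩ := exists_rotate_eq_right (s * i1) (s * i2 + s - 2)
    exact ⟨p, by omega, -2, by omega, by omega⟩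
  · obtain ⟨p, hu, hv⟩ := exists_rotate_eq_right (s * i1 + s - 1) (s * i2 + 1)
    exact ⟨p, by omega, 1, by omega, by omega⟩
  · obtain ⟨p, hu, hv⟩ := exists_rotate_eq_left (s * i1) (s * i2)
    exact ⟨p, by omega, 1, by omega, by omega⟩
  · obtain ⟨p, hu, hv⟩ := exists_rotate_eq_right (s * i1 + s - 1) (s * i2)
    exact ⟨p, by omega, 2, by omega, by omega⟩

end Jacobi1D

open Jacobi1D

/-- for the Jacobi 1D dependences `B₁(i,j) = (i−1,j−1)`,
`B₂(i,j) = (i,j−1)`, `B₃(i,j) = (i+1,j−1)` and tile size `s ≥ 3`, the combined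
footprints of tiles `(i1',i2')` and `(i1,i2)` intersect iff `(i1'−i1, i2'−i2)` is one of
the seven offsets `(0,0), (−1,0), (0,1), (−1,1), (1,0), (0,−1), (1,−1)`. -/
theorem jacobi1d_consumer_tiles
    (s : ℤ) (hs : 3 ≤ s)
    (T : ℤ → ℤ → Set (ℤ × ℤ))
    (hT : ∀ i1 i2, T i1 i2 = {p : ℤ × ℤ |
        (s * i1 ≤ p.1 + p.2 ∧ p.1 + p.2 < s * (1 + i1)) ∧
        (s * i2 ≤ p.2 - p.1 ∧ p.2 - p.1 < s * (1 + i2))})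
    (FP : ℤ → ℤ → Set (ℤ × ℤ))
    (hFP : ∀ i1 i2, FP i1 i2 =
        (fun p : ℤ × ℤ => (p.1 - 1, p.2 - 1)) '' T i1 i2 ∪
        (fun p : ℤ × ℤ => (p.1, p.2 - 1)) '' T i1 i2 ∪
        (fun p : ℤ × ℤ => (p.1 + 1, p.2 - 1)) '' T i1 i2) :
    ∀ i1 i2 i1' i2' : ℤ,
      (FP i1' i2' ∩ FP i1 i2).Nonempty ↔
        (i1' - i1, i2' - i2) ∈
          ({(0,0), (-1,0), (0,1), (-1,1), (1,0), (0,-1), (1,-1)} : Set (ℤ × ℤ)) := by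
  obtain rfl : T = tile s := funext₂ hT
  obtain rfl : FP = fun i1 i2 => footprint (tile s i1 i2) := funext₂ hFP
  intro i1 i2 i1' i2'
  rw [footprint_inter_nonempty_iff]
  constructor
  · rintro ⟨p, hp, k, hk, hpk⟩
    exact sub_mem_offsets_of_mem_tile (by omega) hp hk hpk
  · intro hd
    simpa using exists_shift_mem_tile_of_mem_offsets (i1 := i1) (i2 := i2) hs hd
end
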